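/- arXiv:1510.09182 — 2 statements merged into one kernel-verified Lean document; each statement's English description precedes it below -/
import Mathlib

section
/- Let F : C → Vect_ℝ be a functor from a small category C, and let V = colim F with structure maps λ_c : F(c) → V, realized as the quotient of ⊕_c F(c) by the span R of basic relations (c, w) − (d, F(f)(w)). Suppose c₁, …, c_k are distinct objects and u_i ∈ F(c_i) satisfy Σᵢ λ_{c_i}(u_i) = 0. Then there are finitely many additional distinct objects c_{k+1}, …, c_n, vectors v_{ij} ∈ F(c_i) with Σ_j v_{ij} = u_i for i ≤ k and Σ_j v_{ij} = 0 for i > k, objects d_{ij} and morphisms f_{ij} : c_i → d_{ij}, such that for each object d occurring among the d_{ij}, the sum Σ_{{(i,j) : d_{ij} = d}} F(f_{ij})(v_{ij}) = 0 in F(d). -/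
open CategoryTheory Limits

namespace Stmt15Aux

variable {C : Type} [SmallCategory C] [DecidableEq C] (F : C ⥤ ModuleCat.{0} ℝ)

abbrev DS := DirectSum C (fun c => F.obj c)

def Rel : Submodule ℝ (DS F) :=
  Submodule.span ℝ {x | ∃ (a b : C) (g : a ⟶ b) (w : F.obj a),
    x = DirectSum.of (fun c => F.obj c) a w - DirectSum.of (fun c => F.obj c) b (F.map g w)}

noncomputable def qcocone : Cocone F where
  pt := ModuleCat.of ℝ (DS F ⧸ Rel F)
  ι :=
    { app := fun a => ModuleCat.ofHom (((Rel F).mkQ.comp (DirectSum.lof ℝ C (fun c => F.obj c) a)) :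
        F.obj a →ₗ[ℝ] (DS F ⧸ Rel F))
      naturality := fun a b g => by
        ext w
        dsimp
        change Submodule.Quotient.mk (DirectSum.lof ℝ C (fun c => F.obj c) b ((F.map g) w))
          = Submodule.Quotient.mk (DirectSum.lof ℝ C (fun c => F.obj c) a w)
        rw [Submodule.Quotient.eq]
        have hm : (DirectSum.lof ℝ C (fun c => F.obj c) a w) -
            (DirectSum.lof ℝ C (fun c => F.obj c) b ((F.map g) w)) ∈ Rel F :=
          Submodule.subset_span ⟨a, b, g, w, by simp [DirectSum.lof_eq_of]⟩
        simpa [neg_sub] using Submodule.neg_mem _ hm }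

noncomputable def qdesc (s : Cocone F) : (qcocone F).pt ⟶ s.pt :=
  ModuleCat.ofHom (Submodule.liftQ (Rel F)
    (DirectSum.toModule ℝ C _ (fun a => ((s.ι.app a).hom : F.obj a →ₗ[ℝ] s.pt)))
    (by
      refine Submodule.span_le.mpr ?_
      rintro x ⟨a, b, g, w, rfl⟩
      simp only [SetLike.mem_coe, LinearMap.mem_ker, map_sub]
      rw [← DirectSum.lof_eq_of ℝ, ← DirectSum.lof_eq_of ℝ,
        DirectSum.toModule_lof, DirectSum.toModule_lof]
      have := s.w g
      have h2 : s.ι.app b ((F.map g) w) = s.ι.app a w := by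
        conv_rhs => rw [← this]
        rfl
      rw [sub_eq_zero]
      exact h2.symm) : (DS F ⧸ Rel F) →ₗ[ℝ] s.pt)

noncomputable def qIsColimit : IsColimit (qcocone F) where
  desc s := qdesc F s
  fac s a := by
    ext w
    change (qdesc F s).hom (Submodule.Quotient.mk (DirectSum.lof ℝ C (fun c => F.obj c) a w))
      = (s.ι.app a).hom w
    rw [qdesc]
    erw [Submodule.liftQ_apply, DirectSum.toModule_lof]
  uniq s m hm := by
    refine ModuleCat.hom_ext (Submodule.linearMap_qext _ ?_)
    refine DirectSum.linearMap_ext ℝ fun a => ?_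
    ext w
    have h1 : m (((qcocone F).ι.app a) w) = s.ι.app a w := by
      conv_rhs => rw [← hm a]
      rfl
    have h3 : (qdesc F s) (((qcocone F).ι.app a) w) = s.ι.app a w := by
      change (qdesc F s).hom
        (Submodule.Quotient.mk (DirectSum.lof ℝ C (fun c => F.obj c) a w)) = _
      rw [qdesc]
      erw [Submodule.liftQ_apply, DirectSum.toModule_lof]
    exact h1.trans h3.symm

theorem mem_rel_of_sum_eq_zero {k : ℕ} (c : Fin k → C) (u : ∀ i, F.obj (c i))
    (h : ∑ i, colimit.ι F (c i) (u i) = 0) :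
    (∑ i, DirectSum.of (fun a : C => F.obj a) (c i) (u i)) ∈ Rel F := by
  let t : ColimitCocone F := ⟨qcocone F, qIsColimit F⟩
  let φ : colimit F ⟶ (qcocone F).pt := (colimit.isoColimitCocone t).hom
  have h2 := DFunLike.congr_arg φ.hom h
  rw [map_zero, map_sum] at h2
  have h3 : ∀ i, φ (colimit.ι F (c i) (u i)) =
      (Rel F).mkQ (DirectSum.of (fun a : C => F.obj a) (c i) (u i)) := by
    intro i
    have h4 := DFunLike.congr_fun (congrArg ModuleCat.Hom.hom (colimit.isoColimitCocone_ι_hom t (c i))) (u i)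
    refine Eq.trans ?_ (h4.trans ?_)
    · rfl
    · change Submodule.Quotient.mk
        (DirectSum.lof ℝ C (fun a => F.obj a) (c i) (u i)) = _
      rw [DirectSum.lof_eq_of, Submodule.mkQ_apply]
  rw [Finset.sum_congr rfl (fun i _ => h3 i)] at h2
  have h5 : (Rel F).mkQ (∑ i, DirectSum.of (fun a : C => F.obj a) (c i) (u i)) = 0 := by
    rw [map_sum]; exact h2
  rw [Submodule.mkQ_apply] at h5
  exact (Submodule.Quotient.mk_eq_zero _).1 h5

theorem exists_rep {x : DS F} (hx : x ∈ Rel F) :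
    ∃ (N : ℕ) (a b : Fin N → C) (g : ∀ t, a t ⟶ b t) (w : ∀ t, F.obj (a t)),
      x = ∑ t, (DirectSum.of (fun c : C => F.obj c) (a t) (w t)
        - DirectSum.of (fun c : C => F.obj c) (b t) (F.map (g t) (w t))) := by
  obtain ⟨N, r, g0, hsum⟩ := Submodule.mem_span_set'.1 hx
  choose a b g w hw using fun t => (g0 t).2
  refine ⟨N, a, b, g, fun t => r t • w t, ?_⟩
  rw [← hsum]
  refine Finset.sum_congr rfl fun t _ => ?_
  have hsm : ∀ (p : C) (y : F.obj p), DirectSum.of (fun c : C => F.obj c) p (r t • y)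
      = r t • DirectSum.of (fun c : C => F.obj c) p y := fun p y => by
    rw [← DirectSum.lof_eq_of ℝ, map_smul, DirectSum.lof_eq_of]
  rw [hw t, smul_sub, map_smul (F.map (g t)).hom, hsm, hsm]

def sig {α β : C} (gm : α ⟶ β) (p : C) : Σ γ : C, (p ⟶ γ) :=
  if h : α = p then ⟨β, eqToHom h.symm ≫ gm⟩ else ⟨p, 𝟙 p⟩

theorem key_sig {α β : C} (gm : α ⟶ β) (wv : F.obj α) (p : C) :
    DirectSum.of (fun a : C => F.obj a) (sig gm p).1
      (F.map (sig gm p).2 ((DirectSum.of (fun a : C => F.obj a) α wv) p))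
    = if α = p then DirectSum.of (fun a : C => F.obj a) β (F.map gm wv) else 0 := by
  by_cases h : α = p
  · subst h
    rw [if_pos rfl]
    have hs : sig gm α = ⟨β, gm⟩ := by simp [sig]
    generalize sig gm α = σ at hs ⊢
    subst hs
    simp [DirectSum.of_eq_same]
  · rw [if_neg h, DirectSum.of_apply, dif_neg h, map_zero, map_zero]

theorem sum_ite_range {M : Type*} [AddCommMonoid M] {ι : Type*} [Fintype ι]
    (o : ι → C) (ho : Function.Injective o) {q : C} (hq : ∃ i, o i = q) (X : M) :
    ∑ i, (if q = o i then X else 0) = X := by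
  obtain ⟨i0, rfl⟩ := hq
  rw [Finset.sum_eq_single i0]
  · rw [if_pos rfl]
  · intro j _ hj
    rw [if_neg fun hqe => hj (ho hqe.symm)]
  · intro hmem; exact absurd (Finset.mem_univ i0) hmem

theorem of_neg_apply (q p : C) (y : F.obj q) :
    (DirectSum.of (fun a : C => F.obj a) q (-y)) p
      = -((DirectSum.of (fun a : C => F.obj a) q y) p) := by
  by_cases hqp : q = p
  · subst hqp; rw [DirectSum.of_eq_same, DirectSum.of_eq_same]
  · rw [DirectSum.of_apply, DirectSum.of_apply, dif_neg hqp, dif_neg hqp, neg_zero]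

end Stmt15Aux

/-- If distinct objects `c i` and vectors `u i ∈ F(c i)` have `∑ λ_{c i}(u i) = 0` in the
colimit of `F : C ⥤ Vect_ℝ`, then there are finitely many further distinct objects `d i'`,
decompositions `u i = ∑ⱼ v i j` (and `0 = ∑ⱼ v i j` for the new objects), and morphisms
`f i j : cᵢ → e i j` such that, grouping by targets, `∑ F(f i j)(v i j) = 0`; the grouped
vanishing is recorded as vanishing in the direct sum `⊕_{a ∈ C} F(a)`.
The standing hypothesis `hbig` says every object maps to objects outside any finite set. -/
theorem stmt15 (C : Type) [SmallCategory C] [DecidableEq C] (F : C ⥤ ModuleCat.{0} ℝ)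
    (hbig : ∀ (c : C) (S : Finset C), ∃ (c' : C) (_ : c ⟶ c'), c' ∉ S)
    (k : ℕ) (c : Fin k → C) (hc : Function.Injective c) (u : ∀ i, F.obj (c i))
    (h : ∑ i, colimit.ι F (c i) (u i) = 0) :
    ∃ (n' m : ℕ) (d : Fin n' → C), Function.Injective (Sum.elim c d) ∧
      ∃ (v : ∀ i : Fin k ⊕ Fin n', Fin m → F.obj (Sum.elim c d i))
        (e : ∀ (_ : Fin k ⊕ Fin n'), Fin m → C)
        (f : ∀ (i : Fin k ⊕ Fin n') (j : Fin m), (Sum.elim c d i ⟶ e i j)),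
        (∀ i : Fin k, ∑ j, v (Sum.inl i) j = u i) ∧
        (∀ i' : Fin n', ∑ j, v (Sum.inr i') j = 0) ∧
        ∑ i : Fin k ⊕ Fin n', ∑ j : Fin m,
          DirectSum.of (fun a : C => F.obj a) (e i j) (F.map (f i j) (v i j)) = 0 := by
  classical
  obtain ⟨N, a, b, g, w, hrep⟩ :=
    Stmt15Aux.exists_rep F (Stmt15Aux.mem_rel_of_sum_eq_zero F c u h)
  let T : Finset C := ((Finset.univ.image a) ∪ (Finset.univ.image b)) \ (Finset.univ.image c)
  let dd : Fin T.card → C := fun i' => ((T.equivFin.symm i' : {y // y ∈ T}) : C)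
  have hddT : ∀ i', dd i' ∈ T := fun i' => (T.equivFin.symm i').2
  have hddnc : ∀ i', dd i' ∉ Finset.univ.image c :=
    fun i' => (Finset.mem_sdiff.1 (hddT i')).2
  have hinj : Function.Injective (Sum.elim c dd) := by
    rintro (i | i) (j | j) hij
    · exact congrArg Sum.inl (hc hij)
    · have hij' : c i = dd j := hij
      exact absurd (Finset.mem_image_of_mem c (Finset.mem_univ i))
        (fun hmem => (hddnc j) (hij' ▸ hmem))
    · have hij' : c j = dd i := (show dd i = c j from hij).symm
      exact absurd (Finset.mem_image_of_mem c (Finset.mem_univ j))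
        (fun hmem => (hddnc i) (hij' ▸ hmem))
    · exact congrArg Sum.inr (T.equivFin.symm.injective (Subtype.coe_injective hij))
  have hcover : ∀ p : C, p ∈ ((Finset.univ.image a) ∪ (Finset.univ.image b)) →
      ∃ i : Fin k ⊕ Fin T.card, Sum.elim c dd i = p := by
    intro p hp
    by_cases hpc : p ∈ Finset.univ.image c
    · obtain ⟨i, -, rfl⟩ := Finset.mem_image.1 hpc
      exact ⟨Sum.inl i, rfl⟩
    · refine ⟨Sum.inr (T.equivFin ⟨p, Finset.mem_sdiff.2 ⟨hp, hpc⟩⟩), ?_⟩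
      show ((T.equivFin.symm (T.equivFin _) : {y // y ∈ T}) : C) = p
      rw [Equiv.symm_apply_apply]
  let vP : ∀ p : C, Fin N ⊕ Fin N → F.obj p := fun p => Sum.elim
    (fun t => (DirectSum.of (fun q : C => F.obj q) (a t) (w t)) p)
    (fun t => (DirectSum.of (fun q : C => F.obj q) (b t) (-(F.map (g t) (w t)))) p)
  let sigP : ∀ p : C, Fin N ⊕ Fin N → Σ γ : C, (p ⟶ γ) := fun p => Sum.elim
    (fun t => Stmt15Aux.sig (g t) p) (fun t => Stmt15Aux.sig (𝟙 (b t)) p)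
  have hsum_v : ∀ p : C, ∑ j : Fin (N + N), vP p (finSumFinEquiv.symm j) =
      (∑ t, (DirectSum.of (fun q : C => F.obj q) (a t) (w t)
        - DirectSum.of (fun q : C => F.obj q) (b t) (F.map (g t) (w t)))) p := by
    intro p
    rw [Equiv.sum_comp finSumFinEquiv.symm (vP p), Fintype.sum_sum_type,
      DFinsupp.finset_sum_apply]
    simp only [vP, Sum.elim_inl, Sum.elim_inr, Stmt15Aux.of_neg_apply,
      DirectSum.sub_apply]
    rw [Finset.sum_sub_distrib, sub_eq_add_neg, ← Finset.sum_neg_distrib]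
  refine ⟨T.card, N + N, dd, hinj,
    fun i j => vP (Sum.elim c dd i) (finSumFinEquiv.symm j),
    fun i j => (sigP (Sum.elim c dd i) (finSumFinEquiv.symm j)).1,
    fun i j => (sigP (Sum.elim c dd i) (finSumFinEquiv.symm j)).2, ?_, ?_, ?_⟩
  · intro i
    show ∑ j : Fin (N + N), vP (Sum.elim c dd (Sum.inl i)) (finSumFinEquiv.symm j) = u i
    change ∑ j : Fin (N + N), vP (c i) (finSumFinEquiv.symm j) = u i
    rw [hsum_v (c i), ← hrep, DFinsupp.finset_sum_apply]
    rw [Finset.sum_eq_single i]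
    · exact DirectSum.of_eq_same _ _
    · intro j _ hj
      rw [DirectSum.of_apply, dif_neg (fun hee => hj (hc hee))]
    · intro hmem; exact absurd (Finset.mem_univ i) hmem
  · intro i'
    show ∑ j : Fin (N + N), vP (Sum.elim c dd (Sum.inr i')) (finSumFinEquiv.symm j) = 0
    change ∑ j : Fin (N + N), vP (dd i') (finSumFinEquiv.symm j) = 0
    rw [hsum_v (dd i'), ← hrep, DFinsupp.finset_sum_apply]
    refine Finset.sum_eq_zero fun j _ => ?_
    rw [DirectSum.of_apply,
      dif_neg (fun hee : c j = dd i' => (hddnc i')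
        (hee ▸ Finset.mem_image_of_mem c (Finset.mem_univ j)))]
  · have e1 : ∀ i : Fin k ⊕ Fin T.card,
        (∑ j : Fin (N + N), DirectSum.of (fun q : C => F.obj q)
            ((sigP (Sum.elim c dd i) (finSumFinEquiv.symm j)).1)
            (F.map ((sigP (Sum.elim c dd i) (finSumFinEquiv.symm j)).2)
              (vP (Sum.elim c dd i) (finSumFinEquiv.symm j))))
        = (∑ t, (if a t = Sum.elim c dd i then
              DirectSum.of (fun q : C => F.obj q) (b t) (F.map (g t) (w t)) else 0))
          + (∑ t, (if b t = Sum.elim c dd i then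
              DirectSum.of (fun q : C => F.obj q) (b t)
                (F.map (𝟙 (b t)) (-(F.map (g t) (w t)))) else 0)) := by
      intro i
      rw [Equiv.sum_comp finSumFinEquiv.symm
        (fun s => DirectSum.of (fun q : C => F.obj q) ((sigP (Sum.elim c dd i) s).1)
          (F.map ((sigP (Sum.elim c dd i) s).2) (vP (Sum.elim c dd i) s))),
        Fintype.sum_sum_type]
      congr 1
      · exact Finset.sum_congr rfl fun t _ => Stmt15Aux.key_sig F (g t) (w t) _
      · exact Finset.sum_congr rfl fun t _ =>
          Stmt15Aux.key_sig F (𝟙 (b t)) (-(F.map (g t) (w t))) _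
    rw [Finset.sum_congr rfl (fun i _ => e1 i), Finset.sum_add_distrib]
    have e2 : (∑ i : Fin k ⊕ Fin T.card, ∑ t, (if a t = Sum.elim c dd i then
          DirectSum.of (fun q : C => F.obj q) (b t) (F.map (g t) (w t)) else 0))
        = ∑ t, DirectSum.of (fun q : C => F.obj q) (b t) (F.map (g t) (w t)) := by
      rw [Finset.sum_comm]
      exact Finset.sum_congr rfl fun t _ => Stmt15Aux.sum_ite_range _ hinj
        (hcover (a t) (Finset.mem_union_left _
          (Finset.mem_image_of_mem a (Finset.mem_univ t)))) _
    have e3 : (∑ i : Fin k ⊕ Fin T.card, ∑ t, (if b t = Sum.elim c dd i then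
          DirectSum.of (fun q : C => F.obj q) (b t)
            (F.map (𝟙 (b t)) (-(F.map (g t) (w t)))) else 0))
        = ∑ t, DirectSum.of (fun q : C => F.obj q) (b t)
            (F.map (𝟙 (b t)) (-(F.map (g t) (w t)))) := by
      rw [Finset.sum_comm]
      exact Finset.sum_congr rfl fun t _ => Stmt15Aux.sum_ite_range _ hinj
        (hcover (b t) (Finset.mem_union_right _
          (Finset.mem_image_of_mem b (Finset.mem_univ t)))) _
    rw [e2, e3, ← Finset.sum_add_distrib]
    refine Finset.sum_eq_zero fun t _ => ?_
    simp
end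

section
/- Let (X, x) be a pointed diffeological space and A a D-open subset of X containing x, equipped with the sub-diffeology. Then the germ categories G(A, x) and G(X, x) are equivalent; in particular, (X, x) is filtered if and only if (A, x) is filtered, and weakly filtered if and only if (A, x) is weakly filtered. -/
open Set CategoryTheory Filter Topology

/-- A diffeology on a set `X`. -/
structure DiffeologyData (X : Type u) where
  IsPlot : ∀ {n : ℕ}, Set (Fin n → ℝ) → ((Fin n → ℝ) → X) → Prop
  isOpen_of_isPlot : ∀ {n : ℕ} {U : Set (Fin n → ℝ)} {p}, IsPlot U p → IsOpen U
  isPlot_const : ∀ {n : ℕ} {U : Set (Fin n → ℝ)}, IsOpen U → ∀ x : X, IsPlot U fun _ => x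
  isPlot_comp : ∀ {n m : ℕ} {U : Set (Fin n → ℝ)} {V : Set (Fin m → ℝ)} {p}
    {g : (Fin m → ℝ) → Fin n → ℝ}, IsPlot U p → IsOpen V → ContDiffOn ℝ (⊤ : ℕ∞) g V →
    MapsTo g V U → IsPlot V (p ∘ g)
  isPlot_congr : ∀ {n : ℕ} {U : Set (Fin n → ℝ)} {p q}, IsPlot U p → EqOn p q U → IsPlot U q
  isPlot_sheaf : ∀ {n : ℕ} {U : Set (Fin n → ℝ)} {p}, IsOpen U →
    (∀ u ∈ U, ∃ W, IsOpen W ∧ u ∈ W ∧ W ⊆ U ∧ IsPlot W p) → IsPlot U p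

/-- A subset of a diffeological space is D-open if its preimage under every plot is open. -/
def DOpen {X : Type u} (D : DiffeologyData X) (A : Set X) : Prop :=
  ∀ {n : ℕ} (U : Set (Fin n → ℝ)) (p : (Fin n → ℝ) → X),
    D.IsPlot U p → IsOpen (U ∩ p ⁻¹' A)

/-- The sub-diffeology on a subset `A` of a diffeological space: the plots are the
functions into `A` which are plots of `X`. -/
def subDiffeology {X : Type u} (D : DiffeologyData X) (A : Set X) : DiffeologyData A where
  IsPlot U p := D.IsPlot U fun y => (p y : X)
  isOpen_of_isPlot h := D.isOpen_of_isPlot h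
  isPlot_const h a := D.isPlot_const h (a : X)
  isPlot_comp h hV hg hmap := D.isPlot_comp h hV hg hmap
  isPlot_congr h he := D.isPlot_congr h fun _ hy => congrArg Subtype.val (he hy)
  isPlot_sheaf hU h := D.isPlot_sheaf hU fun u hu => by
    obtain ⟨W, h1, h2, h3, h4⟩ := h u hu
    exact ⟨W, h1, h2, h3, h4⟩

/-- The objects of the germ category `𝒢(X, x)`: plots defined on a connected open
neighborhood of `0` and sending `0` to `x`. -/
structure PlotPt {X : Type u} (D : DiffeologyData X) (x : X) : Type u where
  n : ℕ
  U : Set (Fin n → ℝ)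
  isOpen : IsOpen U
  mem : (0 : Fin n → ℝ) ∈ U
  conn : _root_.IsPreconnected U
  p : (Fin n → ℝ) → X
  plot : D.IsPlot U p
  pt : p 0 = x

namespace PlotPt

variable {X : Type u} {D : DiffeologyData X} {x : X}

/-- `f` represents a germ of pointed smooth maps from `P` to `Q` over `(X, x)`. -/
def IsGermRepr (P Q : PlotPt D x) (f : (Fin P.n → ℝ) → Fin Q.n → ℝ) : Prop :=
  ∃ W, IsOpen W ∧ (0 : Fin P.n → ℝ) ∈ W ∧ W ⊆ P.U ∧ ContDiffOn ℝ (⊤ : ℕ∞) f W ∧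
    MapsTo f W Q.U ∧ f 0 = 0 ∧ ∀ y ∈ W, P.p y = Q.p (f y)

/-- Two representatives define the same germ when they agree near `0`. -/
def germSetoid (P Q : PlotPt D x) : Setoid {f // IsGermRepr P Q f} where
  r f g := f.1 =ᶠ[𝓝 (0 : Fin P.n → ℝ)] g.1
  iseqv := ⟨fun _ => EventuallyEq.rfl, EventuallyEq.symm, EventuallyEq.trans⟩

theorem idRepr (P : PlotPt D x) : IsGermRepr P P fun y => y :=
  ⟨P.U, P.isOpen, P.mem, le_refl _, contDiffOn_id, fun _ hy => hy, rfl, fun _ _ => rfl⟩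

/-- Composition of representatives of germs. -/
def compRepr (P Q R : PlotPt D x) (f : {f // IsGermRepr P Q f})
    (g : {g // IsGermRepr Q R g}) : {h // IsGermRepr P R h} := by
  refine ⟨g.1 ∘ f.1, ?_⟩
  obtain ⟨W, hWo, hW0, hWU, hWsm, hWmap, hf0, hWcomm⟩ := f.2
  obtain ⟨W', hW'o, hW'0, hW'U, hW'sm, hW'map, hg0, hW'comm⟩ := g.2
  refine ⟨W ∩ f.1 ⁻¹' W', hWsm.continuousOn.isOpen_inter_preimage hWo hW'o,
    ⟨hW0, by simp [Set.mem_preimage, hf0, hW'0]⟩, inter_subset_left.trans hWU,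
    hW'sm.comp (hWsm.mono inter_subset_left) fun y hy => hy.2,
    fun y hy => hW'map hy.2, by simp [Function.comp, hf0, hg0], fun y hy => ?_⟩
  exact (hWcomm y hy.1).trans (hW'comm (f.1 y) hy.2)

theorem tendsto_of_repr {P Q : PlotPt D x} (f : {f // IsGermRepr P Q f}) :
    Tendsto f.1 (𝓝 (0 : Fin P.n → ℝ)) (𝓝 (0 : Fin Q.n → ℝ)) := by
  obtain ⟨W, hWo, hW0, hWU, hWsm, hWmap, hf0, hWcomm⟩ := f.2
  have := (hWsm.continuousOn.continuousAt (hWo.mem_nhds hW0)).tendsto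
  rwa [hf0] at this

instance : Category (PlotPt D x) where
  Hom P Q := Quotient (germSetoid P Q)
  id P := Quotient.mk _ ⟨fun y => y, idRepr P⟩
  comp {P Q R} := Quotient.map₂ (compRepr P Q R) (by
    intro f₁ f₂ hf g₁ g₂ hg
    have h1 : g₁.1 ∘ f₁.1 =ᶠ[𝓝 (0 : Fin P.n → ℝ)] g₂.1 ∘ f₁.1 :=
      hg.comp_tendsto (tendsto_of_repr f₁)
    have h2 : g₂.1 ∘ f₁.1 =ᶠ[𝓝 (0 : Fin P.n → ℝ)] g₂.1 ∘ f₂.1 := hf.fun_comp g₂.1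
    exact h1.trans h2)
  id_comp f := Quotient.inductionOn f fun _ => rfl
  comp_id f := Quotient.inductionOn f fun _ => rfl
  assoc f g h := Quotient.inductionOn₃ f g h fun _ _ _ => rfl

end PlotPt

/-- A category is weakly filtered if it is nonempty and any two objects admit a cospan. -/
def WeaklyFiltered (C : Type*) [Category C] : Prop :=
  Nonempty C ∧ ∀ X Y : C, ∃ (Z : C) (_ : X ⟶ Z) (_ : Y ⟶ Z), True

section Aux

variable {X : Type u} {D : DiffeologyData X} {A : Set X} {x : X}

namespace PlotPt

/-- The object part of the inclusion functor. -/
def inclObj (hx : x ∈ A) (P : PlotPt (subDiffeology D A) ⟨x, hx⟩) : PlotPt D x :=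
  ⟨P.n, P.U, P.isOpen, P.mem, P.conn, fun y => (P.p y : X), P.plot,
    congrArg Subtype.val P.pt⟩

/-- The map part of the inclusion functor, on representatives. -/
def inclRepr (hx : x ∈ A) {P Q : PlotPt (subDiffeology D A) ⟨x, hx⟩}
    (f : {f // IsGermRepr P Q f}) :
    {g // IsGermRepr (inclObj hx P) (inclObj hx Q) g} := by
  refine ⟨f.1, ?_⟩
  obtain ⟨W, h1, h2, h3, h4, h5, h6, h7⟩ := f.2
  exact ⟨W, h1, h2, h3, h4, h5, h6, fun y hy => congrArg Subtype.val (h7 y hy)⟩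

/-- The inclusion functor from the germ category of `(A, x)` to that of `(X, x)`. -/
def inclFunctor (D : DiffeologyData X) (A : Set X) (x : X) (hx : x ∈ A) :
    PlotPt (subDiffeology D A) ⟨x, hx⟩ ⥤ PlotPt D x where
  obj := inclObj hx
  map {P Q} := Quotient.map (inclRepr hx) (fun _ _ h => h)
  map_id _ := rfl
  map_comp {P Q R} f g := Quotient.inductionOn₂ f g fun _ _ => rfl

instance (hx : x ∈ A) : (inclFunctor D A x hx).Faithful where
  map_injective {P Q} f g h := by
    induction f using Quotient.inductionOn with | h f =>
    induction g using Quotient.inductionOn with | h g =>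
    have h' : (inclRepr hx f).1 =ᶠ[𝓝 (0 : Fin P.n → ℝ)] (inclRepr hx g).1 :=
      Quotient.exact h
    exact Quotient.sound h'

instance (hx : x ∈ A) : (inclFunctor D A x hx).Full where
  map_surjective {P Q} h := by
    induction h using Quotient.inductionOn with | h f =>
    obtain ⟨W, h1, h2, h3, h4, h5, h6, h7⟩ := f.2
    refine ⟨Quotient.mk _ ⟨f.1, W, h1, h2, h3, h4, h5, h6,
      fun y hy => Subtype.ext (h7 y hy)⟩, ?_⟩
    exact Quotient.sound (Filter.EventuallyEq.rfl)

/-- Reinterpret a plot of `X` as a map into `A`, defaulting to `x` outside `A`. -/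
noncomputable def restrictFun (hx : x ∈ A) (Q : PlotPt D x) (y : Fin Q.n → ℝ) : A :=
  @dite A (Q.p y ∈ A) (Classical.dec _) (fun h => ⟨Q.p y, h⟩) (fun _ => ⟨x, hx⟩)

theorem restrictFun_val (hx : x ∈ A) (Q : PlotPt D x) {y : Fin Q.n → ℝ}
    (h : Q.p y ∈ A) : (restrictFun hx Q y : X) = Q.p y := by
  unfold restrictFun
  rw [dif_pos h]

theorem mem_zero (hx : x ∈ A) (Q : PlotPt D x) :
    (0 : Fin Q.n → ℝ) ∈ Q.U ∩ Q.p ⁻¹' A :=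
  ⟨Q.mem, by simp only [Set.mem_preimage, Q.pt]; exact hx⟩

/-- Restriction of a plot of `X` to a plot of `A`, using D-openness of `A`. -/
noncomputable def restrictPlot (hA : DOpen D A) (hx : x ∈ A) (Q : PlotPt D x) :
    PlotPt (subDiffeology D A) ⟨x, hx⟩ where
  n := Q.n
  U := connectedComponentIn (Q.U ∩ Q.p ⁻¹' A) 0
  isOpen := (hA Q.U Q.p Q.plot).connectedComponentIn
  mem := mem_connectedComponentIn (mem_zero hx Q)
  conn := (isConnected_connectedComponentIn_iff.mpr (mem_zero hx Q)).isPreconnected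
  p := restrictFun hx Q
  plot := by
    have hsub := connectedComponentIn_subset (Q.U ∩ Q.p ⁻¹' A) (0 : Fin Q.n → ℝ)
    refine D.isPlot_congr
      (D.isPlot_comp (g := fun y => y) Q.plot (hA Q.U Q.p Q.plot).connectedComponentIn
        contDiffOn_id fun y hy => (hsub hy).1) fun y hy => ?_
    exact (restrictFun_val hx Q (hsub hy).2).symm
  pt := Subtype.ext <| by
    rw [restrictFun_val hx Q (mem_zero hx Q).2]
    exact Q.pt

theorem essSurj_incl (hA : DOpen D A) (hx : x ∈ A) : (inclFunctor D A x hx).EssSurj := by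
  constructor
  intro Q
  have hsub := connectedComponentIn_subset (Q.U ∩ Q.p ⁻¹' A) (0 : Fin Q.n → ℝ)
  refine ⟨restrictPlot hA hx Q, ⟨?_⟩⟩
  have hrepr₁ : IsGermRepr (inclObj hx (restrictPlot hA hx Q)) Q (fun y => y) :=
    ⟨connectedComponentIn (Q.U ∩ Q.p ⁻¹' A) 0, (hA Q.U Q.p Q.plot).connectedComponentIn,
      mem_connectedComponentIn (mem_zero hx Q), le_refl _, contDiffOn_id,
      fun y hy => (hsub hy).1, rfl,
      fun y hy => restrictFun_val hx Q (hsub hy).2⟩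
  have hrepr₂ : IsGermRepr Q (inclObj hx (restrictPlot hA hx Q)) (fun y => y) :=
    ⟨connectedComponentIn (Q.U ∩ Q.p ⁻¹' A) 0, (hA Q.U Q.p Q.plot).connectedComponentIn,
      mem_connectedComponentIn (mem_zero hx Q), fun y hy => (hsub hy).1, contDiffOn_id,
      fun y hy => hy, rfl,
      fun y hy => (restrictFun_val hx Q (hsub hy).2).symm⟩
  exact ⟨Quotient.mk _ ⟨fun y => y, hrepr₁⟩, Quotient.mk _ ⟨fun y => y, hrepr₂⟩,
    Quotient.sound Filter.EventuallyEq.rfl, Quotient.sound Filter.EventuallyEq.rfl⟩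

end PlotPt

/-- Weak filteredness transfers along an equivalence of categories. -/
lemma weaklyFiltered_of_equivalence {C : Type*} {E : Type*} [Category C] [Category E]
    (e : C ≌ E) (h : WeaklyFiltered C) : WeaklyFiltered E := by
  obtain ⟨⟨c⟩, hc⟩ := h
  refine ⟨⟨e.functor.obj c⟩, fun Y Z => ?_⟩
  obtain ⟨W, f, g, -⟩ := hc (e.inverse.obj Y) (e.inverse.obj Z)
  exact ⟨e.functor.obj W, e.counitIso.inv.app Y ≫ e.functor.map f,
    e.counitIso.inv.app Z ≫ e.functor.map g, trivial⟩

end Aux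

/-- If `A` is a D-open subset of `X` containing `x`, with the sub-diffeology, then the
germ categories `𝒢(A, x)` and `𝒢(X, x)` are equivalent; in particular one is (weakly)
filtered iff the other is. -/
theorem stmt18 {X : Type u} (D : DiffeologyData X) (A : Set X) (hA : DOpen D A)
    (x : X) (hx : x ∈ A) :
    Nonempty (PlotPt (subDiffeology D A) ⟨x, hx⟩ ≌ PlotPt D x) ∧
    (IsFiltered (PlotPt D x) ↔ IsFiltered (PlotPt (subDiffeology D A) ⟨x, hx⟩)) ∧
    (WeaklyFiltered (PlotPt D x) ↔ WeaklyFiltered (PlotPt (subDiffeology D A) ⟨x, hx⟩)) := by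
  let F := PlotPt.inclFunctor D A x hx
  haveI : F.EssSurj := PlotPt.essSurj_incl hA hx
  haveI : F.IsEquivalence := {}
  have e := F.asEquivalence
  refine ⟨⟨e⟩, ⟨fun h => ?_, fun h => ?_⟩, fun h => ?_, fun h => ?_⟩
  · exact IsFiltered.of_equivalence e.symm
  · exact IsFiltered.of_equivalence e
  · exact weaklyFiltered_of_equivalence e.symm h
  · exact weaklyFiltered_of_equivalence e h
end
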